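/- Let G be a normal subgroup of a group E, let f : E → Γ be a surjective homomorphism with kernel G, and let s : Γ → E be a homomorphism with f ∘ s = id. Then the normal core of s(Γ) in E (the intersection of all conjugates σ⁻¹ s(Γ) σ for σ ∈ E) is equal to s(Γ) ∩ C_E(G), the set of elements of s(Γ) that commute with every element of G. -/

import Mathlib

/-!
Every `e : E` factors as `e = g * s (f e)` with `g ∈ G`. Conjugation by `s (f e)` preserves both
`s(Γ)` and `C_E(G)` (the latter because `G` is normal), while conjugation by `g` fixes `C_E(G)`
pointwise; hence `s(Γ) ∩ C_E(G)` is a normal subgroup inside `s(Γ)`, so it lies in the core.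
Conversely, if `x` is in the core and `g ∈ G`, then `g x g⁻¹` and `x` both lie in `s(Γ)` and have
the same image under `f`; since `f` is injective on `s(Γ)`, they are equal.
-/

namespace MonoidHom

variable {E Γ : Type*} [Group E] [Group Γ] {f : E →* Γ} {s : Γ →* E}

theorem apply_apply_of_mem_range (hs : ∀ γ, f (s γ) = γ) {x : E} (hx : x ∈ s.range) :
    s (f x) = x := by
  obtain ⟨γ, rfl⟩ := hx
  rw [hs]

theorem normalCore_range_le_centralizer_ker (hs : ∀ γ, f (s γ) = γ) :
    s.range.normalCore ≤ Subgroup.centralizer (f.ker : Set E) := by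
  intro x hx g hg
  have hgx : g * x * g⁻¹ ∈ s.range := by simpa using hx g
  have hfix : g * x * g⁻¹ = x := calc
    g * x * g⁻¹ = s (f (g * x * g⁻¹)) := (apply_apply_of_mem_range hs hgx).symm
    _ = s (f x) := by simp [(mem_ker).mp hg]
    _ = x := apply_apply_of_mem_range hs (s.range.normalCore_le hx)
  exact mul_inv_eq_iff_eq_mul.mp hfix

theorem normal_range_inf_centralizer_ker (hs : ∀ γ, f (s γ) = γ) :
    (s.range ⊓ Subgroup.centralizer (f.ker : Set E)).Normal := by
  constructor
  rintro n ⟨hn_range, hn_cent⟩ e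
  set t := s (f e)
  have ht : t ∈ s.range := ⟨f e, rfl⟩
  have hg : e * t⁻¹ ∈ f.ker := by simp [t, hs]
  have hm_cent : t * n * t⁻¹ ∈ Subgroup.centralizer (f.ker : Set E) :=
    (Subgroup.normal_centralizer (H := f.ker)).conj_mem n hn_cent t
  have hconj : e * n * e⁻¹ = t * n * t⁻¹ := by
    calc e * n * e⁻¹ = (e * t⁻¹) * (t * n * t⁻¹) * (e * t⁻¹)⁻¹ := by group
      _ = (t * n * t⁻¹) * (e * t⁻¹) * (e * t⁻¹)⁻¹ := by rw [hm_cent _ hg]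
      _ = t * n * t⁻¹ := by group
  rw [hconj]
  exact ⟨s.range.mul_mem (s.range.mul_mem ht hn_range) (s.range.inv_mem ht), hm_cent⟩

end MonoidHom

theorem stmt_5_general {E Γ : Type*} [Group E] [Group Γ] (G : Subgroup E)
    (f : E →* Γ) (hker : f.ker = G)
    (s : Γ →* E) (hs : ∀ γ, f (s γ) = γ) :
    s.range.normalCore = s.range ⊓ Subgroup.centralizer (G : Set E) := by
  subst hker
  have := MonoidHom.normal_range_inf_centralizer_ker hs
  exact le_antisymm (le_inf s.range.normalCore_le (MonoidHom.normalCore_range_le_centralizer_ker hs))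
    (Subgroup.normal_le_normalCore.mpr inf_le_left)

theorem stmt_5 {E Γ : Type*} [Group E] [Group Γ] (G : Subgroup E)
    (f : E →* Γ) (hf : Function.Surjective f) (hker : f.ker = G)
    (s : Γ →* E) (hs : ∀ γ, f (s γ) = γ) :
    s.range.normalCore = s.range ⊓ Subgroup.centralizer (G : Set E) :=
  stmt_5_general G f hker s hs
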